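/- Let U : ℝ^d → ℝ be C² with ∇U(0)=0, sup ‖D²U‖ ≤ L, and D²U(x)[y,y] ≥ m > 0 for ‖x‖ ≥ K and unit y. Let γ̄ ∈ (0, m/(4L²)] and γ ∈ (0, γ̄]. Then for all x ∈ ℝ^d, ∫ ‖y‖² Q_γ(x, dy) ≤ (1 − mγ/2)‖x‖² + γ b̃, where Q_γ(x,·) is the law of x − γ∇U(x) + √(2γ)Z with Z standard Gaussian, K̂ = max(K̃, 2√(2d/m)) with K̃ = 2K(1+L/m), and b̃ = 2d + K̂²(γ̄L² + 2L + m/2). -/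

import Mathlib

/-! Expanding the square, `‖x - γ∇U(x) + √(2γ) Z‖²` has mean `‖x - γ∇U(x)‖² + 2γd`, because
`Z` is centred with `E‖Z‖² = d`. Since `‖D²U‖ ≤ L` and `∇U(0) = 0`, `‖∇U(x)‖ ≤ L‖x‖`; integrating
the Hessian along the segment from `0` to `x` (at least `-L` up to radius `K`, at least `m`
beyond) gives `⟪∇U(x), x⟫ ≥ m‖x‖² - (m + L)K‖x‖ ≥ (m/2)‖x‖²` once `‖x‖ ≥ 2K(1 + L/m)`.
For such `x` the contraction `-2γ⟪∇U(x), x⟫` beats `γ²‖∇U(x)‖² ≤ (mγ/4)‖x‖²`; for smaller `x`,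
`⟪∇U(x), x⟫ ≥ -L‖x‖²` and `‖x‖ < K̂` leave an excess of at most `γK̂²(γ̄L² + 2L + m/2)`. -/

open MeasureTheory ProbabilityTheory Real

/-- The standard Gaussian distribution `N(0, I_d)` on `ℝ^d`. -/
noncomputable def stdGaussian (d : ℕ) : Measure (EuclideanSpace ℝ (Fin d)) :=
  Measure.map (MeasurableEquiv.toLp 2 (Fin d → ℝ))
    (Measure.pi fun _ => gaussianReal 0 1)

open Set
open scoped RealInnerProductSpace

section StdGaussian

variable {E : Type*} [NormedAddCommGroup E] [InnerProductSpace ℝ E] [FiniteDimensional ℝ E]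
  [MeasurableSpace E] [BorelSpace E]

lemma integrable_sq_inner_stdGaussian (v : E) :
    Integrable (fun z ↦ ⟪v, z⟫ ^ 2) (ProbabilityTheory.stdGaussian E) :=
  ((innerSL ℝ v).comp_memLp' IsGaussian.memLp_two_id).integrable_sq

lemma integral_sq_inner_stdGaussian (v : E) :
    ∫ z, ⟪v, z⟫ ^ 2 ∂(ProbabilityTheory.stdGaussian E) = ‖v‖ ^ 2 := by
  have h := covarianceBilin_apply IsGaussian.memLp_two_id v v
    (μ := ProbabilityTheory.stdGaussian E)
  rw [covarianceBilin_stdGaussian, innerSL_apply_apply, real_inner_self_eq_norm_sq] at h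
  simpa [sq] using h.symm

lemma integral_norm_sq_stdGaussian :
    ∫ z, ‖z‖ ^ 2 ∂(ProbabilityTheory.stdGaussian E) = Module.finrank ℝ E := by
  let b := stdOrthonormalBasis ℝ E
  simp_rw [← b.sum_sq_inner_right]
  rw [integral_finsetSum _ fun i _ ↦ integrable_sq_inner_stdGaussian (b i)]
  simp [integral_sq_inner_stdGaussian, b.orthonormal.1]

lemma integral_norm_add_smul_sq_stdGaussian (v : E) (c : ℝ) :
    ∫ z, ‖v + c • z‖ ^ 2 ∂(ProbabilityTheory.stdGaussian E) =
      ‖v‖ ^ 2 + c ^ 2 * Module.finrank ℝ E := by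
  have hexpand : ∀ z : E, ‖v + c • z‖ ^ 2 = ‖v‖ ^ 2 + 2 * c * ⟪v, z⟫ + c ^ 2 * ‖z‖ ^ 2 := by
    intro z
    rw [norm_add_sq_real, real_inner_smul_right, norm_smul, mul_pow, Real.norm_eq_abs, sq_abs]
    ring
  have hinner : Integrable (fun z ↦ ⟪v, z⟫) (ProbabilityTheory.stdGaussian E) :=
    (innerSL ℝ v).integrable_comp IsGaussian.integrable_id
  have hmean : ∫ z, ⟪v, z⟫ ∂(ProbabilityTheory.stdGaussian E) = 0 := by
    simpa only [innerSL_apply_apply] using integral_strongDual_stdGaussian (innerSL ℝ v) (E := E)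
  have hnorm : Integrable (fun z : E ↦ ‖z‖ ^ 2) (ProbabilityTheory.stdGaussian E) :=
    IsGaussian.memLp_two_id.integrable_norm_pow two_ne_zero
  have hlin : Integrable (fun z ↦ ‖v‖ ^ 2 + 2 * c * ⟪v, z⟫) (ProbabilityTheory.stdGaussian E) :=
    (integrable_const _).add (hinner.const_mul _)
  simp_rw [hexpand]
  rw [integral_add hlin (hnorm.const_mul _), integral_add (integrable_const _) (hinner.const_mul _),
    integral_const_mul, integral_const_mul, integral_norm_sq_stdGaussian, hmean]
  simp

end StdGaussian

lemma integral_norm_add_smul_sq_stdGaussian_fin (d : ℕ) (v : EuclideanSpace ℝ (Fin d)) (c : ℝ) :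
    ∫ z, ‖v + c • z‖ ^ 2 ∂(stdGaussian d) = ‖v‖ ^ 2 + c ^ 2 * d := by
  rw [show stdGaussian d = ProbabilityTheory.stdGaussian _ from map_pi_eq_stdGaussian,
    integral_norm_add_smul_sq_stdGaussian, finrank_euclideanSpace_fin]

lemma mul_sub_sub_mul_le_image_sub_of_le_deriv {g : ℝ → ℝ} (hg : Differentiable ℝ g)
    {s A B : ℝ} (hs₀ : 0 ≤ s) (hs₁ : s ≤ 1)
    (hA : ∀ t ∈ Ioo 0 s, -A ≤ deriv g t) (hB : ∀ t ∈ Ioo s 1, B ≤ deriv g t) :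
    B * (1 - s) - A * s ≤ g 1 - g 0 := by
  have h₀ := (convex_Icc 0 s).mul_sub_le_image_sub_of_le_deriv hg.continuous.continuousOn
    hg.differentiableOn (by simpa using hA) 0 ⟨le_rfl, hs₀⟩ s ⟨hs₀, le_rfl⟩ hs₀
  have h₁ := (convex_Icc s 1).mul_sub_le_image_sub_of_le_deriv hg.continuous.continuousOn
    hg.differentiableOn (by simpa using hB) s ⟨le_rfl, hs₁⟩ 1 ⟨hs₁, le_rfl⟩ hs₁
  linarith

section Hessian

variable {E : Type*} [NormedAddCommGroup E] [InnerProductSpace ℝ E] {U : E → ℝ} {L m K : ℝ}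

lemma neg_mul_norm_sq_le_iteratedFDeriv_two_apply_self
    (hHess : ∀ x, ‖iteratedFDeriv ℝ 2 U x‖ ≤ L) (x v : E) :
    -(L * ‖v‖ ^ 2) ≤ iteratedFDeriv ℝ 2 U x ![v, v] := by
  have hle := (iteratedFDeriv ℝ 2 U x).le_opNorm ![v, v]
  simp only [Fin.prod_univ_two, Matrix.cons_val_zero, Matrix.cons_val_one] at hle
  have habs := neg_abs_le (iteratedFDeriv ℝ 2 U x ![v, v])
  rw [← Real.norm_eq_abs] at habs
  nlinarith [hHess x, norm_nonneg v]

lemma mul_norm_sq_le_iteratedFDeriv_two_apply_self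
    (hconv : ∀ x y : E, K ≤ ‖x‖ → ‖y‖ = 1 → m ≤ iteratedFDeriv ℝ 2 U x ![y, y])
    {x : E} (hx : K ≤ ‖x‖) (v : E) :
    m * ‖v‖ ^ 2 ≤ iteratedFDeriv ℝ 2 U x ![v, v] := by
  rcases eq_or_ne v 0 with rfl | hv
  · simp [(iteratedFDeriv ℝ 2 U x).map_coord_zero (m := ![0, 0]) 0 rfl]
  have hvpos : 0 < ‖v‖ := norm_pos_iff.mpr hv
  have hunit : ‖‖v‖⁻¹ • v‖ = 1 := by
    rw [norm_smul, norm_inv, norm_norm, inv_mul_cancel₀ hvpos.ne']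
  have hscale : ![v, v] = fun i ↦ ‖v‖ • ![‖v‖⁻¹ • v, ‖v‖⁻¹ • v] i := by
    ext i : 1
    fin_cases i <;> simp [smul_smul, mul_inv_cancel₀ hvpos.ne']
  rw [hscale, (iteratedFDeriv ℝ 2 U x).map_smul_univ]
  simpa [Fin.prod_univ_two, sq, mul_comm] using
    mul_le_mul_of_nonneg_left (hconv x _ hx hunit) (mul_self_nonneg ‖v‖)

lemma differentiable_fderiv_of_contDiff_two (hU : ContDiff ℝ 2 U) :
    Differentiable ℝ (fderiv ℝ U) :=
  (hU.fderiv_right (m := 1) (by norm_num)).differentiable one_ne_zero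

lemma hasDerivAt_fderiv_smul_apply (hU : ContDiff ℝ 2 U) (x : E) (t : ℝ) :
    HasDerivAt (fun s : ℝ ↦ fderiv ℝ U (s • x) x) (iteratedFDeriv ℝ 2 U (t • x) ![x, x]) t := by
  have hline : HasDerivAt (fun s : ℝ ↦ s • x) x t :=
    ((hasDerivAt_id t).smul_const x).congr_deriv (one_smul ℝ x)
  have hray : HasDerivAt (fun s : ℝ ↦ fderiv ℝ U (s • x)) (fderiv ℝ (fderiv ℝ U) (t • x) x) t :=
    (differentiable_fderiv_of_contDiff_two hU (t • x)).hasFDerivAt.comp_hasDerivAt t hline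
  rw [iteratedFDeriv_two_apply]
  exact (ContinuousLinearMap.apply ℝ ℝ x).hasFDerivAt.comp_hasDerivAt t hray

variable [CompleteSpace E]

lemma norm_gradient_le_of_norm_iteratedFDeriv_two_le (hU : ContDiff ℝ 2 U)
    (hgrad0 : gradient U 0 = 0) (hHess : ∀ x, ‖iteratedFDeriv ℝ 2 U x‖ ≤ L) (x : E) :
    ‖gradient U x‖ ≤ L * ‖x‖ := by
  have hfderiv0 : fderiv ℝ U 0 = 0 := by simpa [gradient] using hgrad0
  have hbound : ∀ y, ‖fderiv ℝ (fderiv ℝ U) y‖ ≤ L := fun y ↦ by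
    simpa [← norm_iteratedFDeriv_one, norm_iteratedFDeriv_fderiv] using hHess y
  have := convex_univ.norm_image_sub_le_of_norm_fderiv_le
    (fun y _ ↦ differentiable_fderiv_of_contDiff_two hU y) (fun y _ ↦ hbound y)
    (mem_univ 0) (mem_univ x)
  simpa [gradient, hfderiv0] using this

lemma half_mul_norm_sq_le_inner_gradient (hm : 0 < m) (hU : ContDiff ℝ 2 U)
    (hgrad0 : gradient U 0 = 0) (hHess : ∀ x, ‖iteratedFDeriv ℝ 2 U x‖ ≤ L)
    (hconv : ∀ x y : E, K ≤ ‖x‖ → ‖y‖ = 1 → m ≤ iteratedFDeriv ℝ 2 U x ![y, y])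
    (x : E) (hx : 2 * K * (1 + L / m) ≤ ‖x‖) :
    m / 2 * ‖x‖ ^ 2 ≤ ⟪gradient U x, x⟫ := by
  wlog hK : 0 ≤ K generalizing K
  · exact this (fun x y _ hy ↦ hconv x y (by linarith [norm_nonneg x]) hy) (by simp) le_rfl
  rcases eq_or_ne x 0 with rfl | hx0
  · simp
  have hxpos : 0 < ‖x‖ := norm_pos_iff.mpr hx0
  have hLm : 0 ≤ L / m := div_nonneg ((norm_nonneg _).trans (hHess 0)) hm.le
  have hKx : K ≤ ‖x‖ := by nlinarith
  have hsx : K / ‖x‖ * ‖x‖ = K := div_mul_cancel₀ K hxpos.ne'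
  -- `t • x` leaves the ball of radius `K` at `t = K / ‖x‖`.
  have hray := mul_sub_sub_mul_le_image_sub_of_le_deriv
    (fun t ↦ (hasDerivAt_fderiv_smul_apply hU x t).differentiableAt)
    (div_nonneg hK hxpos.le) ((div_le_one hxpos).mpr hKx) (A := L * ‖x‖ ^ 2) (B := m * ‖x‖ ^ 2)
    (fun t _ ↦ (hasDerivAt_fderiv_smul_apply hU x t).deriv ▸
      neg_mul_norm_sq_le_iteratedFDeriv_two_apply_self hHess _ x)
    (fun t ht ↦ (hasDerivAt_fderiv_smul_apply hU x t).deriv ▸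
      mul_norm_sq_le_iteratedFDeriv_two_apply_self hconv (by
        rw [norm_smul, norm_of_nonneg (by linarith [ht.1, div_nonneg hK hxpos.le]), ← hsx]
        exact mul_le_mul_of_nonneg_right ht.1.le hxpos.le) x)
  have hg1 : fderiv ℝ U ((1 : ℝ) • x) x = ⟪gradient U x, x⟫ := by
    simp [gradient]
  have hg0 : fderiv ℝ U ((0 : ℝ) • x) x = 0 := by
    simp [(by simpa [gradient] using hgrad0 : fderiv ℝ U 0 = 0)]
  rw [hg1, hg0] at hray
  have hKm : 2 * K * (m + L) ≤ m * ‖x‖ := by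
    have := mul_le_mul_of_nonneg_left hx hm.le
    rwa [show m * (2 * K * (1 + L / m)) = 2 * K * (m + L) by field_simp] at this
  have hexpr : m * ‖x‖ ^ 2 * (1 - K / ‖x‖) - L * ‖x‖ ^ 2 * (K / ‖x‖) =
      m * ‖x‖ ^ 2 - (m + L) * K * ‖x‖ := by
    field_simp
    ring
  nlinarith [mul_le_mul_of_nonneg_right hKm hxpos.le]

lemma norm_sub_smul_gradient_sq_le (hm : 0 < m) (hU : ContDiff ℝ 2 U)
    (hgrad0 : gradient U 0 = 0) (hHess : ∀ x, ‖iteratedFDeriv ℝ 2 U x‖ ≤ L)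
    (hconv : ∀ x y : E, K ≤ ‖x‖ → ‖y‖ = 1 → m ≤ iteratedFDeriv ℝ 2 U x ![y, y])
    {γ γbar R : ℝ} (hγ₀ : 0 ≤ γ) (hγ : γ ≤ γbar) (hγbar : γbar * L ^ 2 ≤ m / 4)
    (hR : 2 * K * (1 + L / m) ≤ R) (x : E) :
    ‖x - γ • gradient U x‖ ^ 2 ≤
      (1 - m * γ / 2) * ‖x‖ ^ 2 + γ * (R ^ 2 * (γbar * L ^ 2 + 2 * L + m / 2)) := by
  have hL : 0 ≤ L := (norm_nonneg _).trans (hHess 0)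
  have hG := norm_gradient_le_of_norm_iteratedFDeriv_two_le hU hgrad0 hHess x
  have hexpand : ‖x - γ • gradient U x‖ ^ 2 =
      ‖x‖ ^ 2 - 2 * γ * ⟪gradient U x, x⟫ + γ ^ 2 * ‖gradient U x‖ ^ 2 := by
    rw [norm_sub_sq_real, real_inner_smul_right, real_inner_comm, norm_smul, mul_pow,
      Real.norm_eq_abs, sq_abs]
    ring
  have hγbar₀ : 0 ≤ γbar := hγ₀.trans hγ
  have hgrad_sq : γ ^ 2 * ‖gradient U x‖ ^ 2 ≤ γ * γbar * (L * ‖x‖) ^ 2 := by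
    have : γ ^ 2 ≤ γ * γbar := by nlinarith
    gcongr
  have hcoef : 0 ≤ γbar * L ^ 2 + 2 * L + m / 2 := by
    have := mul_nonneg hγbar₀ (sq_nonneg L)
    linarith
  rcases le_or_gt R ‖x‖ with hxR | hxR
  · have hinner := half_mul_norm_sq_le_inner_gradient hm hU hgrad0 hHess hconv x (hR.trans hxR)
    nlinarith [mul_le_mul_of_nonneg_left hinner hγ₀,
      mul_nonneg hγ₀ (mul_nonneg (sq_nonneg R) hcoef),
      mul_le_mul_of_nonneg_left hγbar (mul_nonneg hγ₀ (sq_nonneg ‖x‖))]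
  · have hinner : -(L * ‖x‖ ^ 2) ≤ ⟪gradient U x, x⟫ := by
      have := abs_real_inner_le_norm (gradient U x) x
      nlinarith [neg_abs_le ⟪gradient U x, x⟫, norm_nonneg x]
    have hxR2 : ‖x‖ ^ 2 ≤ R ^ 2 := pow_le_pow_left₀ (norm_nonneg x) hxR.le 2
    nlinarith [mul_le_mul_of_nonneg_left hinner hγ₀,
      mul_le_mul_of_nonneg_left hxR2 (mul_nonneg hγ₀ hcoef)]

end Hessian

theorem ula_second_moment_drift_general {d : ℕ} (U : EuclideanSpace ℝ (Fin d) → ℝ)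
    (L m K γbar γ : ℝ) (hm : 0 < m)
    (hU : ContDiff ℝ 2 U) (hgrad0 : gradient U 0 = 0)
    (hHess : ∀ x, ‖iteratedFDeriv ℝ 2 U x‖ ≤ L)
    (hconv : ∀ x y : EuclideanSpace ℝ (Fin d), K ≤ ‖x‖ → ‖y‖ = 1 →
      m ≤ iteratedFDeriv ℝ 2 U x ![y, y])
    (hγbar : γbar ∈ Set.Ioc 0 (m / (4 * L ^ 2))) (hγ : γ ∈ Set.Ioc 0 γbar) :
    ∀ x : EuclideanSpace ℝ (Fin d),
      ∫ z, ‖x - γ • gradient U x + Real.sqrt (2 * γ) • z‖ ^ 2 ∂(stdGaussian d) ≤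
        (1 - m * γ / 2) * ‖x‖ ^ 2 +
          γ * (2 * d + (max (2 * K * (1 + L / m)) (2 * Real.sqrt (2 * d / m))) ^ 2 *
            (γbar * L ^ 2 + 2 * L + m / 2)) := by
  intro x
  rw [integral_norm_add_smul_sq_stdGaussian_fin, sq_sqrt (by linarith [hγ.1])]
  have hγbarL : γbar * L ^ 2 ≤ m / 4 := by
    have := mul_le_of_le_div₀ hm.le (by positivity) hγbar.2
    linarith
  have := norm_sub_smul_gradient_sq_le hm hU hgrad0 hHess hconv hγ.1.le hγ.2 hγbarL
    (le_max_left _ (2 * Real.sqrt (2 * d / m))) x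
  linarith

/-- Second-moment drift for ULA: for `γ̄ ∈ (0, m/(4L²)]`, `γ ∈ (0, γ̄]` and all `x`,
`∫ ‖y‖² Q_γ(x,dy) ≤ (1 − mγ/2)‖x‖² + γ b̃`, where `Q_γ(x,·)` is the law of
`x − γ∇U(x) + √(2γ)Z`, `K̂ = max(2K(1+L/m), 2√(2d/m))` and
`b̃ = 2d + K̂²(γ̄L² + 2L + m/2)`. -/
theorem ula_second_moment_drift {d : ℕ} (U : EuclideanSpace ℝ (Fin d) → ℝ)
    (L m K γbar γ : ℝ) (hm : 0 < m) (hmL : m ≤ L) (hK : 0 ≤ K)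
    (hU : ContDiff ℝ 2 U) (hgrad0 : gradient U 0 = 0)
    (hHess : ∀ x, ‖iteratedFDeriv ℝ 2 U x‖ ≤ L)
    (hconv : ∀ x y : EuclideanSpace ℝ (Fin d), K ≤ ‖x‖ → ‖y‖ = 1 →
      m ≤ iteratedFDeriv ℝ 2 U x ![y, y])
    (hγbar : γbar ∈ Set.Ioc 0 (m / (4 * L ^ 2))) (hγ : γ ∈ Set.Ioc 0 γbar) :
    ∀ x : EuclideanSpace ℝ (Fin d),
      ∫ z, ‖x - γ • gradient U x + Real.sqrt (2 * γ) • z‖ ^ 2 ∂(stdGaussian d) ≤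
        (1 - m * γ / 2) * ‖x‖ ^ 2 +
          γ * (2 * d + (max (2 * K * (1 + L / m)) (2 * Real.sqrt (2 * d / m))) ^ 2 *
            (γbar * L ^ 2 + 2 * L + m / 2)) :=
  ula_second_moment_drift_general U L m K γbar γ hm hU hgrad0 hHess hconv hγbar hγ
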